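/- arXiv:1309.4299 — 2 statements merged into one kernel-verified Lean document; each statement's English description precedes it below -/
import Mathlib

section
/- Let u be a smooth solution of (−Δ)^{3/2}u = 2e^{3u} with finite volume. Then there exists a constant C > 0 such that for all x ∈ ℝ³ with |x| ≥ 4 one has −v(x) ≤ α log|x| + C, i.e. v(x) ≥ −α log|x| − C. -/
open MeasureTheory Real Filter

noncomputable section

abbrev E3 := EuclideanSpace ℝ (Fin 3)

/-- The Laplacian of `f : ℝ³ → ℝ` as the sum of second partial derivatives. -/
def lap (f : E3 → ℝ) (x : E3) : ℝ :=
  ∑ i, fderiv ℝ (fun y => fderiv ℝ f y (EuclideanSpace.single i 1)) x (EuclideanSpace.single i 1)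

/-- The half Laplacian `(-Δ)^{1/2} φ` of a Schwartz function on ℝ³, defined as a
principal value: `(1/π²) lim_{ε→0⁺} ∫_{|x−y|>ε} (φ(x)−φ(y))/|x−y|⁴ dy`. -/
def halfLap (φ : SchwartzMap E3 ℝ) (x : E3) : ℝ :=
  limUnder (nhdsWithin (0:ℝ) (Set.Ioi 0)) fun ε =>
    (1 / π ^ 2) * ∫ y in {y : E3 | ε < ‖x - y‖}, (φ x - φ y) / ‖x - y‖ ^ 4

/-- `w ∈ L_{1/2}(ℝ³)`. -/
def MemL12 (w : E3 → ℝ) : Prop :=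
  LocallyIntegrable w volume ∧ Integrable (fun x => |w x| / (1 + ‖x‖ ^ 4)) volume

/-- `u` is a smooth solution of `(-Δ)^{3/2} u = 2 e^{3u}` in ℝ³ with finite volume. -/
def IsSolution (u : E3 → ℝ) : Prop :=
  ContDiff ℝ (⊤ : ℕ∞) u ∧ MemL12 (lap u) ∧ Integrable (fun x => exp (3 * u x)) volume ∧
    ∀ φ : SchwartzMap E3 ℝ,
      ∫ x, (-(lap u x)) * halfLap φ x = 2 * ∫ x, exp (3 * u x) * φ x

/-- `u` is a spherical solution. -/
def IsSpherical (u : E3 → ℝ) : Prop :=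
  ∃ lam : ℝ, 0 < lam ∧ ∃ x₀ : E3, ∀ x, u x = log (2 * lam / (1 + lam ^ 2 * ‖x - x₀‖ ^ 2))

/-- `α = (1/π²) ∫ e^{3u}`. -/
def solAlpha (u : E3 → ℝ) : ℝ := (1 / π ^ 2) * ∫ y, exp (3 * u y)

/-- `v(x) = (1/π²) ∫ log(|y|/|x−y|) e^{3u(y)} dy`. -/
def solV (u : E3 → ℝ) (x : E3) : ℝ :=
  (1 / π ^ 2) * ∫ y, log (‖y‖ / ‖x - y‖) * exp (3 * u y)

end

open Set

/-- `max 0 (-log ‖·‖)` is integrable on the unit ball of ℝ³. -/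
lemma aux_logIntegrable : IntegrableOn (fun y : E3 => max 0 (-Real.log ‖y‖))
    (Metric.closedBall 0 1) volume := by
  have hmble : Measurable fun y : E3 => max 0 (-Real.log ‖y‖) :=
    measurable_const.max (Real.measurable_log.comp measurable_norm).neg
  refine ⟨hmble.aestronglyMeasurable.restrict, ?_⟩
  rw [hasFiniteIntegral_iff_ofReal ?_]; swap
  · exact Filter.Eventually.of_forall fun y => le_max_left _ _
  rw [lintegral_eq_lintegral_meas_lt (f := fun y : E3 => max 0 (-Real.log ‖y‖))
    (volume.restrict (Metric.closedBall 0 1))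
    (Filter.Eventually.of_forall fun y => le_max_left _ _) hmble.aemeasurable]
  set V := volume (Metric.ball (0 : E3) 1) with hV
  have hVlt : V < ⊤ := measure_ball_lt_top
  have hbound : ∀ t ∈ Ioi (0:ℝ),
      (volume.restrict (Metric.closedBall (0 : E3) 1))
        {a | t < max 0 (-Real.log ‖a‖)} ≤ ENNReal.ofReal (exp (3 * -t)) * V := by
    intro t ht
    have hsub : {a : E3 | t < max 0 (-Real.log ‖a‖)} ⊆ Metric.ball 0 (exp (-t)) := by
      intro a ha
      have ha' : t < max 0 (-Real.log ‖a‖) := ha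
      have h1 : t < -Real.log ‖a‖ := by
        rcases lt_max_iff.1 ha' with h | h
        · exact absurd h (not_lt.2 ht.out.le)
        · exact h
      have h2 : Real.log ‖a‖ < -t := by linarith
      rcases eq_or_lt_of_le (norm_nonneg a) with h0 | h0
      · simp [Metric.mem_ball, ← h0, exp_pos]
      · have := Real.exp_lt_exp.2 h2
        rw [Real.exp_log h0] at this
        simpa [Metric.mem_ball, dist_zero_right] using this
    calc (volume.restrict (Metric.closedBall (0 : E3) 1))
          {a | t < max 0 (-Real.log ‖a‖)}
        ≤ volume (Metric.ball (0 : E3) (exp (-t))) :=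
          le_trans (measure_mono hsub) (Measure.restrict_le_self _)
      _ = ENNReal.ofReal (exp (-t) ^ Module.finrank ℝ E3) * V :=
          Measure.addHaar_ball _ _ (exp_pos _).le
      _ = ENNReal.ofReal (exp (3 * -t)) * V := by
          congr 1
          rw [finrank_euclideanSpace_fin, show (3:ℝ) * -t = ((3:ℕ):ℝ) * -t by norm_num,
            Real.exp_nat_mul]
  calc ∫⁻ t in Ioi (0:ℝ), (volume.restrict (Metric.closedBall (0:E3) 1))
        {a | t < max 0 (-Real.log ‖a‖)}
      ≤ ∫⁻ t in Ioi (0:ℝ), ENNReal.ofReal (exp (3 * -t)) * V :=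
        setLIntegral_mono' measurableSet_Ioi hbound
    _ = (∫⁻ t in Ioi (0:ℝ), ENNReal.ofReal (exp (3 * -t))) * V :=
        lintegral_mul_const'' V (by fun_prop)
    _ < ⊤ := by
        apply ENNReal.mul_lt_top _ hVlt
        have hint : IntegrableOn (fun t : ℝ => exp (-3 * t)) (Ioi 0) volume :=
          exp_neg_integrableOn_Ioi 0 (by norm_num)
        have := hint.hasFiniteIntegral
        rw [hasFiniteIntegral_iff_ofReal
          (Filter.Eventually.of_forall fun t => (exp_pos _).le)] at this
        simpa [mul_comm, neg_mul, mul_neg] using this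

/-- Theorem 7 (upper bound for `−v`): for a smooth finite-volume solution `u` of
`(−Δ)^{3/2}u = 2e^{3u}` there exists `C > 0` such that `−v(x) ≤ α log|x| + C` for `|x| ≥ 4`. -/
theorem neg_v_upper_bound (u : E3 → ℝ) (hu : IsSolution u) :
    ∃ C : ℝ, 0 < C ∧ ∀ x : E3, 4 ≤ ‖x‖ → -(solV u x) ≤ solAlpha u * Real.log ‖x‖ + C := by
  obtain ⟨hsmooth, -, hexp, -⟩ := hu
  have hcont : Continuous fun y : E3 => exp (3 * u y) :=
    Real.continuous_exp.comp (continuous_const.mul hsmooth.continuous)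
  obtain ⟨M, hM⟩ := (isCompact_closedBall (0:E3) 1).exists_bound_of_continuousOn
    hcont.continuousOn
  have hmax_mble : Measurable fun y : E3 => max 0 (-Real.log ‖y‖) :=
    measurable_const.max (Real.measurable_log.comp measurable_norm).neg
  have hh'on : IntegrableOn (fun y : E3 => max 0 (-Real.log ‖y‖) * exp (3 * u y))
      (Metric.closedBall 0 1) volume := by
    apply Integrable.mono' (aux_logIntegrable.const_mul M)
    · exact (hmax_mble.mul hcont.measurable).aestronglyMeasurable.restrict
    · filter_upwards [ae_restrict_mem measurableSet_closedBall] with y hy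
      have h1 : 0 ≤ max 0 (-Real.log ‖y‖) := le_max_left _ _
      have h2 : exp (3 * u y) ≤ M := le_trans (le_abs_self _) (hM y hy)
      rw [Real.norm_of_nonneg (mul_nonneg h1 (exp_pos _).le)]
      calc max 0 (-Real.log ‖y‖) * exp (3 * u y) ≤ max 0 (-Real.log ‖y‖) * M :=
            mul_le_mul_of_nonneg_left h2 h1
        _ = M * max 0 (-Real.log ‖y‖) := mul_comm _ _
  have hh' : Integrable (fun y : E3 => max 0 (-Real.log ‖y‖) * exp (3 * u y)) volume := by
    rw [← integrable_indicator_iff measurableSet_closedBall] at hh'on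
    refine hh'on.congr (Filter.Eventually.of_forall fun y => ?_)
    by_cases hy : y ∈ Metric.closedBall (0:E3) 1
    · rw [indicator_of_mem hy]
    · rw [indicator_of_notMem hy]
      have h1 : (1:ℝ) < ‖y‖ := by
        simpa [Metric.mem_closedBall, dist_zero_right, not_le] using hy
      have h2 : -Real.log ‖y‖ ≤ 0 := neg_nonpos.2 (Real.log_nonneg h1.le)
      show (0:ℝ) = max 0 (-Real.log ‖y‖) * exp (3 * u y)
      rw [max_eq_left h2, zero_mul]
  set I := ∫ y, exp (3 * u y) with hI
  have hI0 : 0 ≤ I := integral_nonneg fun y => (exp_pos _).le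
  set J := ∫ y : E3, max 0 (-Real.log ‖y‖) * exp (3 * u y) with hJ
  have hJ0 : 0 ≤ J := integral_nonneg fun y => mul_nonneg (le_max_left _ _) (exp_pos _).le
  have hπ : (0:ℝ) < 1 / π ^ 2 := by positivity
  have hlog2 : 0 ≤ Real.log 2 := Real.log_nonneg one_le_two
  have hCnn : 0 ≤ (1 / π ^ 2) * (Real.log 2 * I + J) :=
    mul_nonneg hπ.le (add_nonneg (mul_nonneg hlog2 hI0) hJ0)
  refine ⟨(1 / π ^ 2) * (Real.log 2 * I + J) + 1, by linarith, ?_⟩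
  intro x hx
  have hxpos : (0:ℝ) < ‖x‖ := by linarith
  have hlogx : 0 ≤ Real.log ‖x‖ := Real.log_nonneg (by linarith)
  have halpha : solAlpha u = (1 / π ^ 2) * I := by rw [solAlpha, hI]
  have halpha0 : 0 ≤ solAlpha u := by rw [halpha]; exact mul_nonneg hπ.le hI0
  by_cases hf : Integrable (fun y : E3 => Real.log (‖y‖ / ‖x - y‖) * exp (3 * u y)) volume
  · have hptw : ∀ y : E3, -(Real.log (‖y‖ / ‖x - y‖) * exp (3 * u y)) ≤
        (Real.log 2 + Real.log ‖x‖) * exp (3 * u y)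
          + max 0 (-Real.log ‖y‖) * exp (3 * u y) := by
      intro y
      have h0max : 0 ≤ max 0 (-Real.log ‖y‖) := le_max_left _ _
      have hkey : -Real.log (‖y‖ / ‖x - y‖) ≤
          Real.log 2 + Real.log ‖x‖ + max 0 (-Real.log ‖y‖) := by
        rcases eq_or_lt_of_le (norm_nonneg y) with h0 | h0
        · rw [← h0]
          simp only [zero_div, Real.log_zero, neg_zero, max_self]
          linarith
        rcases eq_or_lt_of_le (norm_nonneg (x - y)) with h1 | h1
        · rw [← h1]
          simp only [div_zero, Real.log_zero, neg_zero]
          linarith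
        · rw [Real.log_div (ne_of_gt h0) (ne_of_gt h1), neg_sub]
          have hle : Real.log ‖x - y‖ ≤ Real.log (‖x‖ + ‖y‖) :=
            Real.log_le_log h1 (norm_sub_le x y)
          rcases le_total ‖y‖ ‖x‖ with hc | hc
          · have h2 : Real.log (‖x‖ + ‖y‖) ≤ Real.log (2 * ‖x‖) :=
              Real.log_le_log (by linarith) (by linarith)
            rw [Real.log_mul two_ne_zero (ne_of_gt hxpos)] at h2
            have hmax : -Real.log ‖y‖ ≤ max 0 (-Real.log ‖y‖) := le_max_right _ _
            linarith
          · have h2 : Real.log (‖x‖ + ‖y‖) ≤ Real.log (2 * ‖y‖) :=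
              Real.log_le_log (by linarith) (by linarith)
            rw [Real.log_mul two_ne_zero (ne_of_gt h0)] at h2
            linarith
      calc -(Real.log (‖y‖ / ‖x - y‖) * exp (3 * u y))
          = (-Real.log (‖y‖ / ‖x - y‖)) * exp (3 * u y) := (neg_mul _ _).symm
        _ ≤ (Real.log 2 + Real.log ‖x‖ + max 0 (-Real.log ‖y‖)) * exp (3 * u y) :=
            mul_le_mul_of_nonneg_right hkey (exp_pos _).le
        _ = (Real.log 2 + Real.log ‖x‖) * exp (3 * u y)
              + max 0 (-Real.log ‖y‖) * exp (3 * u y) := by ring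
    have hg : Integrable (fun y : E3 => (Real.log 2 + Real.log ‖x‖) * exp (3 * u y)
        + max 0 (-Real.log ‖y‖) * exp (3 * u y)) volume := (hexp.const_mul _).add hh'
    have hmono := integral_mono hf.neg hg hptw
    simp only [Pi.neg_apply] at hmono
    rw [integral_neg, integral_add (hexp.const_mul _) hh', integral_const_mul] at hmono
    have hv : -(solV u x) ≤ (1 / π ^ 2) * ((Real.log 2 + Real.log ‖x‖) * I + J) := by
      rw [solV, ← mul_neg]
      exact mul_le_mul_of_nonneg_left hmono hπ.le
    have hid : (1 / π ^ 2) * ((Real.log 2 + Real.log ‖x‖) * I + J)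
        = (1 / π ^ 2 * I) * Real.log ‖x‖ + (1 / π ^ 2) * (Real.log 2 * I + J) := by ring
    rw [halpha]
    linarith [hv, hid.le]
  · rw [solV, integral_undef hf, mul_zero, neg_zero]
    have := mul_nonneg halpha0 hlogx
    linarith
end

section
/- Let p : ℝ³ → ℝ be a polynomial of degree at most 2 (so that Δp is a constant), and let w : ℝ³ → ℝ be a continuous function for which there exist constants α ≥ 0 and C₀ ≥ 0 with w(x) ≥ −α log(2+|x|) − C₀ for all x ∈ ℝ³. If e^{3(w+p)} ∈ L¹(ℝ³), then Δp ≤ 0. -/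
open MeasureTheory Real Filter

section Aux
open MvPolynomial

noncomputable def mvD (P : MvPolynomial (Fin 3) ℝ) (x : E3) : E3 →L[ℝ] ℝ :=
  ∑ j, (eval (fun k => x k) (pderiv j P)) • (EuclideanSpace.proj j : E3 →L[ℝ] ℝ)

theorem hasFDerivAt_mv (P : MvPolynomial (Fin 3) ℝ) (x : E3) :
    HasFDerivAt (fun y : E3 => eval (fun j => y j) P) (mvD P x) x := by
  induction P using MvPolynomial.induction_on with
  | C a =>
      have : mvD (C a : MvPolynomial (Fin 3) ℝ) x = 0 := by
        simp [mvD, pderiv_C]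
      rw [this]
      simpa using hasFDerivAt_const a x
  | add p q hp hq =>
      have : mvD (p + q) x = mvD p x + mvD q x := by
        simp [mvD, map_add, add_smul, Finset.sum_add_distrib]
      rw [this]
      exact (hp.add hq).congr_fderiv rfl |>.congr_of_eventuallyEq (by filter_upwards with y; simp)
  | mul_X p i hp =>
      have hXi : HasFDerivAt (fun y : E3 => y i) (EuclideanSpace.proj i : E3 →L[ℝ] ℝ) x :=
        (EuclideanSpace.proj i : E3 →L[ℝ] ℝ).hasFDerivAt
      have h := hp.mul hXi
      have : mvD (p * X i) x =
          eval (fun k => x k) p • (EuclideanSpace.proj i : E3 →L[ℝ] ℝ) + (x i) • mvD p x := by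
        simp only [mvD, pderiv_mul, map_add, map_mul, pderiv_X, eval_X, add_smul,
          Finset.sum_add_distrib, Finsupp.smul_sum]
        rw [add_comm]
        congr 1
        · rw [Finset.sum_eq_single i]
          · simp
          · intro b _ hb
            simp [Pi.single_apply, hb]
          · simp
        · rw [Finset.smul_sum]
          refine Finset.sum_congr rfl fun j _ => ?_
          rw [smul_smul, mul_comm]
      rw [this]
      exact h.congr_of_eventuallyEq (by filter_upwards with y; simp [map_mul])

theorem continuous_mv (P : MvPolynomial (Fin 3) ℝ) :
    Continuous (fun y : E3 => eval (fun j => y j) P) :=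
  continuous_iff_continuousAt.2 fun x => (hasFDerivAt_mv P x).differentiableAt.continuousAt

theorem mvD_single (P : MvPolynomial (Fin 3) ℝ) (x : E3) (i : Fin 3) :
    mvD P x (EuclideanSpace.single i 1) = eval (fun k => x k) (pderiv i P) := by
  simp only [mvD, ContinuousLinearMap.sum_apply, ContinuousLinearMap.smul_apply,
    PiLp.proj_apply, EuclideanSpace.single_apply, smul_eq_mul]
  rw [Finset.sum_eq_single i] <;> simp +contextual

theorem fderiv_mv_single (Q : MvPolynomial (Fin 3) ℝ) (x : E3) (i : Fin 3) :
    fderiv ℝ (fun y : E3 => eval (fun j => y j) Q) x (EuclideanSpace.single i 1)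
      = eval (fun k => x k) (pderiv i Q) := by
  rw [(hasFDerivAt_mv Q x).fderiv, mvD_single]

theorem lap_mv (P : MvPolynomial (Fin 3) ℝ) (x : E3) :
    lap (fun y : E3 => eval (fun j => y j) P) x
      = ∑ i, eval (fun k => x k) (pderiv i (pderiv i P)) := by
  unfold lap
  refine Finset.sum_congr rfl fun i _ => ?_
  have h1 : (fun y : E3 =>
        fderiv ℝ (fun y : E3 => eval (fun j => y j) P) y (EuclideanSpace.single i 1))
      = fun y : E3 => eval (fun j => y j) (pderiv i P) := funext fun y => fderiv_mv_single P y i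
  rw [h1, fderiv_mv_single]

theorem totalDegree_pderiv_le {n : ℕ} (P : MvPolynomial (Fin 3) ℝ) (i : Fin 3)
    (h : P.totalDegree ≤ n + 1) : (pderiv i P).totalDegree ≤ n := by
  conv_lhs => rw [P.as_sum]
  rw [map_sum]
  refine (totalDegree_finset_sum _ _).trans (Finset.sup_le fun m hm => ?_)
  rw [pderiv_monomial]
  rcases eq_or_ne (coeff m P * m i) 0 with h0 | h0
  · simp [h0]
  · rw [totalDegree_monomial _ h0]
    have hmi : 1 ≤ m i := Nat.one_le_iff_ne_zero.2 fun hh => h0 (by simp [hh])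
    have hle : Finsupp.single i 1 ≤ m := by
      intro j
      rcases eq_or_ne j i with rfl | hj
      · simpa using hmi
      · simp [Finsupp.single_apply, Ne.symm hj]
    have hsum : (m - Finsupp.single i 1).sum (fun _ e => e) + 1 = m.sum (fun _ e => e) := by
      have hc := tsub_add_cancel_of_le hle
      calc (m - Finsupp.single i 1).sum (fun _ e => e) + 1
          = (m - Finsupp.single i 1).sum (fun _ e => e)
            + (Finsupp.single i 1).sum (fun _ e => e) := by simp
        _ = ((m - Finsupp.single i 1) + Finsupp.single i 1).sum (fun _ e => e) := by
            rw [Finsupp.sum_add_index'] <;> simp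
        _ = m.sum (fun _ e => e) := by rw [hc]
    have := le_totalDegree hm
    omega

theorem eval_const_of_totalDegree_zero (Q : MvPolynomial (Fin 3) ℝ)
    (h : Q.totalDegree = 0) (x y : Fin 3 → ℝ) : eval x Q = eval y Q := by
  rw [eval_eq, eval_eq]
  refine Finset.sum_congr rfl fun m hm => ?_
  have := (totalDegree_eq_zero_iff _ Q).1 h m hm
  simp [this]

theorem line_deriv (P : MvPolynomial (Fin 3) ℝ) (i : Fin 3) (x : E3) (t : ℝ) :
    HasDerivAt (fun s : ℝ => eval (fun j => (x + s • EuclideanSpace.single i (1:ℝ)) j) P)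
      (eval (fun j => (x + t • EuclideanSpace.single i (1:ℝ)) j) (pderiv i P)) t := by
  have hc : HasDerivAt (fun s : ℝ => x + s • EuclideanSpace.single i (1:ℝ))
      (EuclideanSpace.single i (1:ℝ)) t := by
    simpa using ((hasDerivAt_id t).smul_const (EuclideanSpace.single i (1:ℝ))).const_add x
  have h := (hasFDerivAt_mv P (x + t • EuclideanSpace.single i (1:ℝ))).comp_hasDerivAt t hc
  rw [mvD_single] at h
  exact h

theorem line_quadratic (P : MvPolynomial (Fin 3) ℝ) (i : Fin 3) (d : ℝ)
    (hconst : ∀ y : E3, eval (fun k => y k) (pderiv i (pderiv i P)) = d)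
    (x : E3) (t : ℝ) :
    eval (fun j => (x + t • EuclideanSpace.single i (1:ℝ)) j) P
      = eval (fun j => x j) P + eval (fun j => x j) (pderiv i P) * t + d * t ^ 2 / 2 := by
  have h0 : (fun j => (x + (0:ℝ) • EuclideanSpace.single i (1:ℝ)) j) = fun j => x j := by
    funext j; simp
  have hp1 : ∀ t : ℝ, eval (fun j => (x + t • EuclideanSpace.single i (1:ℝ)) j) (pderiv i P)
      = eval (fun j => x j) (pderiv i P) + d * t := by
    have hF1 : ∀ s : ℝ, HasDerivAt
        (fun s : ℝ => eval (fun j => (x + s • EuclideanSpace.single i (1:ℝ)) j) (pderiv i P)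
          - d * s) 0 s := by
      intro s
      have h1 := line_deriv (pderiv i P) i x s
      rw [hconst] at h1
      have h2 : HasDerivAt (fun u : ℝ => d * u) d s := by
        simpa using (hasDerivAt_id s).const_mul d
      have h3 := h1.sub h2
      rw [sub_self] at h3
      exact h3
    intro t
    have hcst := is_const_of_deriv_eq_zero (f := fun s : ℝ =>
        eval (fun j => (x + s • EuclideanSpace.single i (1:ℝ)) j) (pderiv i P) - d * s)
      (fun u => (hF1 u).differentiableAt) (fun u => (hF1 u).deriv) t 0
    simp only [h0, mul_zero, sub_zero] at hcst
    linarith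
  have hF : ∀ s : ℝ, HasDerivAt
      (fun s : ℝ => eval (fun j => (x + s • EuclideanSpace.single i (1:ℝ)) j) P
        - (eval (fun j => x j) P + eval (fun j => x j) (pderiv i P) * s + d * s ^ 2 / 2)) 0 s := by
    intro s
    have h1 := line_deriv P i x s
    rw [hp1 s] at h1
    have h2 : HasDerivAt (fun s : ℝ => eval (fun j => x j) P
        + eval (fun j => x j) (pderiv i P) * s + d * s ^ 2 / 2)
        (eval (fun j => x j) (pderiv i P) + d * s) s := by
      have ha : HasDerivAt (fun s : ℝ => eval (fun j => x j) (pderiv i P) * s)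
          (eval (fun j => x j) (pderiv i P)) s := by
        simpa using (hasDerivAt_id s).const_mul (eval (fun j => x j) (pderiv i P))
      have hb : HasDerivAt (fun s : ℝ => d * s ^ 2 / 2) (d * s) s := by
        have h4 := ((hasDerivAt_pow 2 s).const_mul d).div_const 2
        refine h4.congr_deriv ?_
        push_cast
        ring
      exact (ha.const_add (eval (fun j => x j) P)).add hb
    have h3 := h1.sub h2
    rw [sub_self] at h3
    exact h3
  have hcst := is_const_of_deriv_eq_zero (f := fun s : ℝ =>
      eval (fun j => (x + s • EuclideanSpace.single i (1:ℝ)) j) P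
        - (eval (fun j => x j) P + eval (fun j => x j) (pderiv i P) * s + d * s ^ 2 / 2))
    (fun u => (hF u).differentiableAt) (fun u => (hF u).deriv) t 0
  simp only [h0, mul_zero, add_zero] at hcst
  have hz2 : (0:ℝ) ^ 2 = 0 := by norm_num
  rw [hz2] at hcst
  linarith [hcst]

end Aux

/-- Theorem 19: if `p` is a polynomial on ℝ³ of degree at most 2, `w` is continuous with
`w(x) ≥ −α log(2+|x|) − C₀`, and `e^{3(w+p)} ∈ L¹(ℝ³)`, then `Δp ≤ 0`. -/
theorem laplacian_nonpos_of_integrable (P : MvPolynomial (Fin 3) ℝ)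
    (hP : P.totalDegree ≤ 2) (w : E3 → ℝ) (hw : Continuous w)
    (a C₀ : ℝ) (ha : 0 ≤ a) (hC₀ : 0 ≤ C₀)
    (hlow : ∀ x : E3, -a * Real.log (2 + ‖x‖) - C₀ ≤ w x)
    (hint : Integrable
      (fun x : E3 => Real.exp (3 * (w x + MvPolynomial.eval (fun i => x i) P))) volume) :
    ∀ x : E3, lap (fun y : E3 => MvPolynomial.eval (fun i => y i) P) x ≤ 0 := by
  intro x₀
  by_contra hpos
  push_neg at hpos
  rw [lap_mv] at hpos
  obtain ⟨i, hi⟩ : ∃ i, 0 < MvPolynomial.eval (fun k => x₀ k)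
      (MvPolynomial.pderiv i (MvPolynomial.pderiv i P)) := by
    by_contra hc
    push_neg at hc
    exact absurd (Finset.sum_nonpos fun j _ => hc j) (not_le.2 hpos)
  have hdeg : (MvPolynomial.pderiv i (MvPolynomial.pderiv i P)).totalDegree = 0 :=
    Nat.le_zero.1 (totalDegree_pderiv_le _ i (totalDegree_pderiv_le _ i hP))
  obtain ⟨d, hd, hconst⟩ : ∃ d : ℝ, 0 < d ∧ ∀ y : E3, MvPolynomial.eval (fun k => y k)
      (MvPolynomial.pderiv i (MvPolynomial.pderiv i P)) = d :=
    ⟨_, hi, fun y => eval_const_of_totalDegree_zero _ hdeg _ _⟩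
  obtain ⟨M, hM0, hMp, hMq⟩ : ∃ M : ℝ, 0 ≤ M ∧
      (∀ z ∈ Metric.closedBall x₀ 1, |MvPolynomial.eval (fun j => z j) P| ≤ M) ∧
      (∀ z ∈ Metric.closedBall x₀ 1,
        |MvPolynomial.eval (fun j => z j) (MvPolynomial.pderiv i P)| ≤ M) := by
    obtain ⟨M₁, h₁⟩ := (isCompact_closedBall x₀ 1).exists_bound_of_continuousOn
      (continuous_mv P).continuousOn
    obtain ⟨M₂, h₂⟩ := (isCompact_closedBall x₀ 1).exists_bound_of_continuousOn
      (continuous_mv (MvPolynomial.pderiv i P)).continuousOn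
    refine ⟨max (max M₁ M₂) 0, le_max_right _ _, fun z hz => ?_, fun z hz => ?_⟩
    · exact (Real.norm_eq_abs _ ▸ h₁ z hz).trans
        (le_trans (le_max_left _ _) (le_max_left _ _))
    · exact (Real.norm_eq_abs _ ▸ h₂ z hz).trans
        (le_trans (le_max_right _ _) (le_max_left _ _))
  obtain ⟨V, hV, hVball⟩ : ∃ V : ℝ, 0 < V ∧
      ∀ c : E3, (volume (Metric.closedBall c 1)).toReal = V := by
    refine ⟨(volume (Metric.closedBall (0 : E3) 1)).toReal, ENNReal.toReal_pos
      (Metric.measure_closedBall_pos volume _ one_pos).ne' measure_closedBall_lt_top.ne,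
      fun c => ?_⟩
    rw [Measure.addHaar_closedBall_center]
  obtain ⟨I, hI_def⟩ : ∃ I : ℝ,
      I = ∫ x : E3, Real.exp (3 * (w x + MvPolynomial.eval (fun i => x i) P)) := ⟨_, rfl⟩
  obtain ⟨R, hR_def⟩ : ∃ R : ℝ, R = I / V := ⟨_, rfl⟩
  obtain ⟨K, hKsum, hK0⟩ : ∃ K : ℝ, M + a ≤ K ∧ 0 ≤ K := ⟨M + a, le_refl _, by positivity⟩
  obtain ⟨K', hK'1, hK'0⟩ : ∃ K' : ℝ, M + C₀ + a * (3 + ‖x₀‖) ≤ K' ∧ 0 ≤ K' := by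
    refine ⟨M + C₀ + a * (3 + ‖x₀‖), le_refl _, by positivity⟩
  obtain ⟨t, ht1, ht2⟩ : ∃ t : ℝ, 1 ≤ t ∧ (2 / d) * (K + K' + |R|) ≤ t :=
    ⟨max 1 _, le_max_left _ _, le_max_right _ _⟩
  have ht0 : (0:ℝ) ≤ t := by linarith
  obtain ⟨φ, hφ_def⟩ : ∃ φ : ℝ, φ = d / 2 * t ^ 2 - K * t - K' := ⟨_, rfl⟩
  have hφR : |R| ≤ φ := by
    have hd2 : (0:ℝ) < d / 2 := by linarith
    have h3 : K + K' + |R| ≤ d / 2 * t := by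
      have h := mul_le_mul_of_nonneg_left ht2 hd2.le
      calc K + K' + |R| = d / 2 * ((2 / d) * (K + K' + |R|)) := by
            field_simp
        _ ≤ d / 2 * t := h
    have h4 : (K + K' + |R|) * t ≤ d / 2 * t * t := mul_le_mul_of_nonneg_right h3 ht0
    have h5 : K * t + K' + |R| ≤ (K + K' + |R|) * t := by nlinarith [abs_nonneg R]
    have h6 : d / 2 * t * t = d / 2 * t ^ 2 := by ring
    rw [h6] at h4
    rw [hφ_def]
    linarith
  -- pointwise lower bound on the shifted ball
  have hpt : ∀ x ∈ Metric.closedBall (x₀ + t • EuclideanSpace.single i (1:ℝ)) 1,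
      φ ≤ w x + MvPolynomial.eval (fun j => x j) P := by
    intro x hx
    have hzball : x - t • EuclideanSpace.single i (1:ℝ) ∈ Metric.closedBall x₀ 1 := by
      rw [Metric.mem_closedBall, dist_eq_norm] at hx ⊢
      have hvec : x - t • EuclideanSpace.single i (1:ℝ) - x₀
          = x - (x₀ + t • EuclideanSpace.single i (1:ℝ)) := by abel
      rw [hvec]
      exact hx
    have hfun : x - t • EuclideanSpace.single i (1:ℝ) + t • EuclideanSpace.single i (1:ℝ)
        = x := by abel
    have hq := line_quadratic P i d hconst (x - t • EuclideanSpace.single i (1:ℝ)) t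
    rw [hfun] at hq
    have hb1' := abs_le.1 (hMp _ hzball)
    have hb2' := abs_le.1 (hMq _ hzball)
    have hmul : -M * t ≤ MvPolynomial.eval
        (fun j => (x - t • EuclideanSpace.single i (1:ℝ)) j) (MvPolynomial.pderiv i P) * t :=
      mul_le_mul_of_nonneg_right hb2'.1 ht0
    have hpx : -M - M * t + d / 2 * t ^ 2 ≤ MvPolynomial.eval (fun j => x j) P := by
      rw [hq]
      have h7 : d * t ^ 2 / 2 = d / 2 * t ^ 2 := by ring
      rw [h7]
      linarith [hb1'.1, hmul]
    have hxn : ‖x‖ ≤ ‖x₀‖ + 1 + t := by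
      have h1 : ‖x‖ ≤ ‖x - (x₀ + t • EuclideanSpace.single i (1:ℝ))‖
          + ‖x₀ + t • EuclideanSpace.single i (1:ℝ)‖ := by
        calc ‖x‖ = ‖x - (x₀ + t • EuclideanSpace.single i (1:ℝ))
              + (x₀ + t • EuclideanSpace.single i (1:ℝ))‖ := by rw [sub_add_cancel]
          _ ≤ _ := norm_add_le _ _
      have h2 : ‖x₀ + t • EuclideanSpace.single i (1:ℝ)‖ ≤ ‖x₀‖ + t := by
        calc ‖x₀ + t • EuclideanSpace.single i (1:ℝ)‖
            ≤ ‖x₀‖ + ‖t • EuclideanSpace.single i (1:ℝ)‖ := norm_add_le _ _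
          _ = ‖x₀‖ + |t| * ‖EuclideanSpace.single i (1:ℝ)‖ := by
              rw [norm_smul, Real.norm_eq_abs]
          _ = ‖x₀‖ + t := by
              rw [EuclideanSpace.norm_single, norm_one, mul_one, abs_of_nonneg ht0]
      rw [Metric.mem_closedBall, dist_eq_norm] at hx
      linarith
    have hlog : Real.log (2 + ‖x‖) ≤ 3 + ‖x₀‖ + t := by
      have h2p : (0:ℝ) < 2 + ‖x‖ := by positivity
      calc Real.log (2 + ‖x‖) ≤ (2 + ‖x‖) - 1 := Real.log_le_sub_one_of_pos h2p
        _ ≤ 3 + ‖x₀‖ + t := by linarith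
    have hwx : -(a * (3 + ‖x₀‖)) - a * t - C₀ ≤ w x := by
      have h1 := hlow x
      have h2 : a * Real.log (2 + ‖x‖) ≤ a * (3 + ‖x₀‖ + t) :=
        mul_le_mul_of_nonneg_left hlog ha
      have h3 : a * (3 + ‖x₀‖ + t) = a * (3 + ‖x₀‖) + a * t := by ring
      nlinarith
    have hsum : (M + a) * t ≤ K * t := mul_le_mul_of_nonneg_right hKsum ht0
    have hexp : (M + a) * t = M * t + a * t := by ring
    rw [hφ_def]
    linarith [hpx, hwx, hsum, hexp, hK'1]
  -- integral comparison
  have hS : MeasurableSet (Metric.closedBall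
      (x₀ + t • EuclideanSpace.single i (1:ℝ)) 1) := measurableSet_closedBall
  have hμS : volume (Metric.closedBall
      (x₀ + t • EuclideanSpace.single i (1:ℝ)) 1) ≠ ⊤ := measure_closedBall_lt_top.ne
  have hge : Real.exp (3 * φ) * V ≤
      ∫ x in Metric.closedBall (x₀ + t • EuclideanSpace.single i (1:ℝ)) 1,
        Real.exp (3 * (w x + MvPolynomial.eval (fun i => x i) P)) := by
    have h := setIntegral_ge_of_const_le (μ := volume) (c := Real.exp (3 * φ)) hS hμS
      (fun x hx => Real.exp_le_exp.2 (by linarith [hpt x hx])) hint.integrableOn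
    rwa [MeasureTheory.Measure.real, hVball, smul_eq_mul, mul_comm] at h
  have hle : (∫ x in Metric.closedBall (x₀ + t • EuclideanSpace.single i (1:ℝ)) 1,
      Real.exp (3 * (w x + MvPolynomial.eval (fun i => x i) P))) ≤ I := by
    rw [hI_def]
    exact setIntegral_le_integral hint (Filter.Eventually.of_forall fun x => (Real.exp_pos _).le)
  have hRV : R * V = I := by
    rw [hR_def]
    exact div_mul_cancel₀ I hV.ne'
  have hRexp : R < Real.exp (3 * φ) := by
    have h1 : 3 * φ + 1 ≤ Real.exp (3 * φ) := Real.add_one_le_exp _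
    have h2 : |R| ≤ 3 * φ := by
      have := abs_nonneg R
      linarith
    calc R ≤ |R| := le_abs_self R
      _ < 3 * φ + 1 := by linarith
      _ ≤ Real.exp (3 * φ) := h1
  have hlt : I < Real.exp (3 * φ) * V := by
    calc I = R * V := hRV.symm
      _ < Real.exp (3 * φ) * V := mul_lt_mul_of_pos_right hRexp hV
  linarith
end
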